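/- Let V ∈ ℝ³, ω ∈ S², V_∥ = (V·ω)ω, V_⊥ = V − V_∥, and M(v) = e^{−|v|²/2}. Then for all v ∈ ℝ³, M(v + V_∥) M(v + V)³ ≤ M(V_⊥)^{1/2}, i.e. e^{−|v+V_∥|²/2} e^{−3|v+V|²/2} ≤ e^{−|V_⊥|²/4}. -/

import Mathlib

open Real
open scoped RealInnerProductSpace

noncomputable section

abbrev E3 := EuclideanSpace ℝ (Fin 3)

/-! Write `a = v + V_∥`, so that `v + V = a + V_⊥`. Completing the square in `a`,
`s‖a‖² + t‖a + b‖² ≥ st/(s+t) ‖b‖²`; with `s = 1`, `t = 3` the exponent on the left is at most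
`-(3/8)‖V_⊥‖² ≤ -‖V_⊥‖²/4`. -/

section CompletingTheSquare

variable {F : Type*} [NormedAddCommGroup F] [InnerProductSpace ℝ F]

theorem add_mul_weighted_norm_sq_eq (s t : ℝ) (a b : F) :
    (s + t) * (s * ‖a‖ ^ 2 + t * ‖a + b‖ ^ 2) =
      ‖(s + t) • a + t • b‖ ^ 2 + s * t * ‖b‖ ^ 2 := by
  rw [norm_add_sq_real, norm_add_sq_real, norm_smul, norm_smul, inner_smul_left,
    inner_smul_right, Real.norm_eq_abs, Real.norm_eq_abs, mul_pow, mul_pow, sq_abs, sq_abs]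
  simp only [conj_trivial]
  ring

theorem mul_div_add_mul_norm_sq_le {s t : ℝ} (hst : 0 < s + t) (a b : F) :
    s * t / (s + t) * ‖b‖ ^ 2 ≤ s * ‖a‖ ^ 2 + t * ‖a + b‖ ^ 2 := by
  rw [div_mul_eq_mul_div, div_le_iff₀ hst, mul_comm _ (s + t), add_mul_weighted_norm_sq_eq]
  exact le_add_of_nonneg_left (sq_nonneg _)

end CompletingTheSquare

theorem gaussian_parallel_perp_inequality_general (V : E3)
    (Vpar Vperp : E3) (hperp : Vperp = V - Vpar) :
    ∀ v : E3,
      Real.exp (-‖v + Vpar‖ ^ 2 / 2) * Real.exp (-(3 * ‖v + V‖ ^ 2) / 2)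
        ≤ Real.exp (-‖Vperp‖ ^ 2 / 4) := by
  intro v
  have hsplit : v + V = (v + Vpar) + Vperp := by rw [hperp]; abel
  have hquad := mul_div_add_mul_norm_sq_le (s := 1) (t := 3) (by norm_num) (v + Vpar) Vperp
  rw [← hsplit] at hquad
  rw [← Real.exp_add, Real.exp_le_exp]
  norm_num at hquad
  linarith [sq_nonneg ‖Vperp‖]

theorem gaussian_parallel_perp_inequality (V ω : E3) (hω : ω ∈ Metric.sphere (0 : E3) 1)
    (Vpar Vperp : E3) (hpar : Vpar = ⟪V, ω⟫ • ω) (hperp : Vperp = V - Vpar) :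
    ∀ v : E3,
      Real.exp (-‖v + Vpar‖ ^ 2 / 2) * Real.exp (-(3 * ‖v + V‖ ^ 2) / 2)
        ≤ Real.exp (-‖Vperp‖ ^ 2 / 4) :=
  gaussian_parallel_perp_inequality_general V Vpar Vperp hperp
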